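/- Let A : R^n → R^m be linear with Im(A) ∩ Q_m = {0}, where Q_m is the second-order cone. Then Q_m + ker(A*) = R^m, and consequently A*(Q_m) = A*(R^m) = Im(A*). -/

import Mathlib

open scoped RealInnerProductSpace

noncomputable section

/-- The "tail" `y_r` of a vector `y = (y_0, y_r) ∈ ℝ × ℝ^d`. -/
def tail {d : ℕ} (y : EuclideanSpace ℝ (Fin (d+1))) : EuclideanSpace ℝ (Fin d) :=
  WithLp.toLp 2 (fun i : Fin d => y i.succ)

/-- The second-order (Lorentz) cone `Q_{d+1} = {(y_0, y_r) : ‖y_r‖ ≤ y_0}`. -/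
def SOC (d : ℕ) : Set (EuclideanSpace ℝ (Fin (d+1))) := {y | ‖tail y‖ ≤ y 0}

/-- `x̃ = (-x_0, x_r)`. -/
def tilde {d : ℕ} (x : EuclideanSpace ℝ (Fin (d+1))) : EuclideanSpace ℝ (Fin (d+1)) :=
  WithLp.toLp 2 (fun i => if i = 0 then -(x 0) else x i)

section Aux

variable {d : ℕ}

lemma tail_add (y z : EuclideanSpace ℝ (Fin (d+1))) : tail (y + z) = tail y + tail z := by
  ext i; simp [tail]

lemma tail_smul (t : ℝ) (y : EuclideanSpace ℝ (Fin (d+1))) : tail (t • y) = t • tail y := by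
  ext i; simp [tail]

lemma inner_decomp (c b : EuclideanSpace ℝ (Fin (d+1))) :
    ⟪c, b⟫ = c 0 * b 0 + ⟪tail c, tail b⟫ := by
  simp [PiLp.inner_apply, RCLike.inner_apply, conj_trivial, Fin.sum_univ_succ, tail, mul_comm]

lemma norm_sq_decomp (y : EuclideanSpace ℝ (Fin (d+1))) :
    ‖y‖ ^ 2 = (y 0) ^ 2 + ‖tail y‖ ^ 2 := by
  rw [← real_inner_self_eq_norm_sq, inner_decomp, real_inner_self_eq_norm_sq]; ring

lemma continuous_tail :
    Continuous (tail : EuclideanSpace ℝ (Fin (d+1)) → EuclideanSpace ℝ (Fin d)) := by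
  have h1 : Continuous (WithLp.equiv 2 (Fin (d+1) → ℝ)) := PiLp.continuous_ofLp _ _
  have h2 : Continuous (WithLp.equiv 2 (Fin d → ℝ)).symm := PiLp.continuous_toLp _ _
  have h3 : Continuous fun (g : Fin (d+1) → ℝ) (i : Fin d) => g i.succ :=
    continuous_pi fun i => continuous_apply _
  exact h2.comp (h3.comp h1)

lemma continuous_coord0 :
    Continuous (fun y : EuclideanSpace ℝ (Fin (d+1)) => y 0) := by
  have h1 : Continuous (WithLp.equiv 2 (Fin (d+1) → ℝ)) := PiLp.continuous_ofLp _ _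
  exact (continuous_apply (0 : Fin (d+1))).comp h1

lemma isClosed_SOC : IsClosed (SOC d) := by
  have : SOC d = {y | ‖tail y‖ - y 0 ≤ 0} := by
    ext y; simp [SOC, sub_nonpos]
  rw [this]
  exact isClosed_le (continuous_tail.norm.sub continuous_coord0) continuous_const

lemma convex_SOC : Convex ℝ (SOC d) := by
  intro y hy z hz a b ha hb hab
  simp only [SOC, Set.mem_setOf_eq] at *
  have ht : tail (a • y + b • z) = a • tail y + b • tail z := by
    rw [tail_add, tail_smul, tail_smul]
  have h0 : (a • y + b • z) 0 = a * y 0 + b * z 0 := by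
    simp
  rw [ht, h0]
  calc ‖a • tail y + b • tail z‖ ≤ a * ‖tail y‖ + b * ‖tail z‖ := by
        refine (norm_add_le _ _).trans ?_
        rw [norm_smul, norm_smul, Real.norm_eq_abs, Real.norm_eq_abs,
          abs_of_nonneg ha, abs_of_nonneg hb]
    _ ≤ a * y 0 + b * z 0 := by
        gcongr

end Aux

theorem soc_plus_ker_adjoint_eq_univ (n d : ℕ)
    (A : EuclideanSpace ℝ (Fin n) →ₗ[ℝ] EuclideanSpace ℝ (Fin (d+1)))
    (hA : Set.range ⇑A ∩ SOC d = {0}) :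
    {y : EuclideanSpace ℝ (Fin (d+1)) |
        ∃ q ∈ SOC d, ∃ k : EuclideanSpace ℝ (Fin (d+1)),
          (LinearMap.adjoint A) k = 0 ∧ y = q + k} = Set.univ ∧
    ⇑(LinearMap.adjoint A) '' SOC d = Set.range ⇑(LinearMap.adjoint A) := by
  classical
  -- the range of A, as a closed convex set
  have hWeq : (Set.range ⇑A) = ((LinearMap.range A : Submodule ℝ (EuclideanSpace ℝ (Fin (d+1)))) : Set (EuclideanSpace ℝ (Fin (d+1)))) := by
    simp [LinearMap.coe_range]
  have hWclosed : IsClosed (Set.range ⇑A) := by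
    rw [hWeq]; exact Submodule.closed_of_finiteDimensional _
  have hWconvex : Convex ℝ (Set.range ⇑A) := by
    rw [hWeq]; exact (LinearMap.range A).convex
  -- a compact convex base of the cone
  set B : Set (EuclideanSpace ℝ (Fin (d+1))) := {y | y ∈ SOC d ∧ y 0 = 1} with hB
  have hBconvex : Convex ℝ B := by
    intro y hy z hz a b ha hb hab
    refine ⟨convex_SOC hy.1 hz.1 ha hb hab, ?_⟩
    have : (a • y + b • z) 0 = a * y 0 + b * z 0 := by
      simp only [PiLp.add_apply, PiLp.smul_apply, smul_eq_mul]
    rw [this, hy.2, hz.2]; ring_nf; exact hab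
  have hBclosed : IsClosed B := by
    have : B = SOC d ∩ {y | y 0 = 1} := rfl
    rw [this]
    exact isClosed_SOC.inter (isClosed_eq continuous_coord0 continuous_const)
  have hBcompact : IsCompact B := by
    refine Metric.isCompact_of_isClosed_isBounded hBclosed ?_
    rw [isBounded_iff_forall_norm_le]
    refine ⟨Real.sqrt 2, fun y hy => ?_⟩
    have h1 : ‖tail y‖ ≤ 1 := hy.2 ▸ hy.1
    have h2 : ‖y‖ ^ 2 ≤ 2 := by
      rw [norm_sq_decomp, hy.2]
      nlinarith [h1, norm_nonneg (tail y)]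
    exact (Real.le_sqrt (norm_nonneg y) (by norm_num)).mpr h2
  -- B is disjoint from the range of A
  have hdisj : Disjoint (Set.range ⇑A) B := by
    rw [Set.disjoint_left]
    rintro w hw ⟨hwS, hw0⟩
    have : w ∈ Set.range ⇑A ∩ SOC d := ⟨hw, hwS⟩
    rw [hA] at this
    rw [Set.mem_singleton_iff] at this
    subst this
    simp at hw0
  -- separation
  obtain ⟨f, u, v, hfu, huv, hfv⟩ :=
    geometric_hahn_banach_closed_compact hWconvex hWclosed hBconvex hBcompact hdisj
  have hu0 : 0 < u := by
    have := hfu 0 ⟨0, map_zero A⟩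
    simpa using this
  have hfW : ∀ x, f (A x) = 0 := by
    intro x
    by_contra h
    have hmem : ((u + 1) / f (A x)) • (A x) ∈ Set.range ⇑A :=
      ⟨((u + 1) / f (A x)) • x, by simp [map_smul]⟩
    have h2 := hfu _ hmem
    rw [map_smul, smul_eq_mul, div_mul_cancel₀ _ h] at h2
    linarith
  -- the separating vector
  set c : EuclideanSpace ℝ (Fin (d+1)) := (InnerProductSpace.toDual ℝ _).symm f with hc
  have hc_inner : ∀ y : EuclideanSpace ℝ (Fin (d+1)), ⟪c, y⟫ = f y := fun y => InnerProductSpace.toDual_symm_apply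
  set s : ℝ := ‖tail c‖ with hs
  have hsnn : 0 ≤ s := norm_nonneg _
  -- a witness b ∈ B showing ‖tail c‖ < c 0
  have hkey : s < c 0 := by
    set b : EuclideanSpace ℝ (Fin (d+1)) := WithLp.toLp 2 (fun i => if i = 0 then 1 else -(s⁻¹ * c i) : Fin (d+1) → ℝ) with hbdef
    have hb0 : b 0 = 1 := by simp [hbdef]
    have htailb : tail b = (-s⁻¹) • tail c := by
      ext i
      simp [tail, hbdef, Fin.succ_ne_zero]
      try ring
    have hbB : b ∈ B := by
      refine ⟨?_, hb0⟩
      show ‖tail b‖ ≤ b 0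
      rw [htailb, hb0, norm_smul]
      rcases eq_or_lt_of_le hsnn with h0 | hpos
      · rw [← hs, ← h0]; norm_num
      · rw [Real.norm_eq_abs, abs_neg, abs_of_nonneg (inv_nonneg.mpr hsnn), ← hs,
          inv_mul_cancel₀ (ne_of_gt hpos)]
    have hvb := hfv b hbB
    rw [← hc_inner, inner_decomp, hb0, htailb, real_inner_smul_right,
      real_inner_self_eq_norm_sq, ← hs] at hvb
    have hX : -s⁻¹ * s ^ 2 = -s := by
      rcases eq_or_lt_of_le hsnn with h0 | hpos
      · rw [← h0]; norm_num
      · field_simp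
    rw [hX] at hvb
    linarith
  have hcpos : 0 < c 0 - s := by linarith
  -- c is orthogonal to range A, so adjoint A c = 0
  have hadjc : (LinearMap.adjoint A) c = 0 := by
    have h2 : ⟪(LinearMap.adjoint A) c, (LinearMap.adjoint A) c⟫ = 0 := by
      rw [LinearMap.adjoint_inner_left, hc_inner]
      exact hfW _
    exact inner_self_eq_zero.mp h2
  -- main decomposition
  have main : ∀ y : EuclideanSpace ℝ (Fin (d+1)), ∃ q ∈ SOC d, ∃ k : EuclideanSpace ℝ (Fin (d+1)), (LinearMap.adjoint A) k = 0 ∧ y = q + k := by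
    intro y
    set t : ℝ := max 0 ((‖tail y‖ - y 0) / (c 0 - s)) with htdef
    have ht0 : 0 ≤ t := le_max_left _ _
    have htge : ‖tail y‖ - y 0 ≤ t * (c 0 - s) := by
      have := le_max_right 0 ((‖tail y‖ - y 0) / (c 0 - s))
      calc ‖tail y‖ - y 0 = (‖tail y‖ - y 0) / (c 0 - s) * (c 0 - s) := by
            field_simp
        _ ≤ t * (c 0 - s) := by
            apply mul_le_mul_of_nonneg_right this (le_of_lt hcpos)
    refine ⟨y + t • c, ?_, -(t • c), ?_, by abel⟩
    · show ‖tail (y + t • c)‖ ≤ (y + t • c) 0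
      rw [tail_add, tail_smul]
      have h0 : (y + t • c) 0 = y 0 + t * c 0 := by
        simp only [PiLp.add_apply, PiLp.smul_apply, smul_eq_mul]
      rw [h0]
      calc ‖tail y + t • tail c‖ ≤ ‖tail y‖ + t * s := by
            refine (norm_add_le _ _).trans ?_
            rw [norm_smul, Real.norm_eq_abs, abs_of_nonneg ht0, ← hs]
        _ ≤ y 0 + t * c 0 := by nlinarith
    · rw [map_neg, map_smul, hadjc, smul_zero, neg_zero]
  constructor
  · ext y
    simp only [Set.mem_setOf_eq, Set.mem_univ, iff_true]
    exact main y
  · apply Set.Subset.antisymm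
    · rintro z ⟨q, hq, rfl⟩
      exact ⟨q, rfl⟩
    · rintro z ⟨y, rfl⟩
      obtain ⟨q, hq, k, hk, hy⟩ := main y
      refine ⟨q, hq, ?_⟩
      rw [hy, map_add, hk, add_zero]
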